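/- arXiv:1804.11020 — 2 statements merged into one kernel-verified Lean document; each statement's English description precedes it below -/
import Mathlib

section
/- Let Y ⊆ ℝ^m be the reachable objective space with nonempty Pareto front Y*, and assume every element of Y* has all coordinates nonnegative (the ideal point is the zero vector). Let w ∈ ℝ^m have strictly positive entries and define g_w on objective vectors by g_w(y) = max_{1 ≤ j ≤ m} w_j |y_j|. Let y¹, ..., y^N ∈ Y be finitely many sampled objective vectors, let A be the set of sampled vectors not Pareto-dominated by any other sample, and suppose the best sample satisfies min_{1 ≤ i ≤ N} g_w(y^i) ≤ inf_{y ∈ Y} g_w(y) + δ for some δ ≥ 0. Then I¹_{ε+}(A) ≤ (max_{1 ≤ j ≤ m} 1/w_j) · (inf_{y ∈ Y} g_w(y) + δ). -/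
open Finset

/-- Pareto dominance for objective vectors (to be minimized): `y₁ ≺ y₂`. -/
def Dominates {m : ℕ} (y₁ y₂ : Fin m → ℝ) : Prop :=
  (∀ j, y₁ j ≤ y₂ j) ∧ ∃ k, y₁ k < y₂ k

/-- The Pareto front of a set of objective vectors: its nondominated elements. -/
def ParetoFront {m : ℕ} (Y : Set (Fin m → ℝ)) : Set (Fin m → ℝ) :=
  {y ∈ Y | ¬ ∃ z ∈ Y, Dominates z y}

/-- The unary additive ε-indicator of `A` relative to the (Pareto front) set `Ystar`:
`inf {ε | ∀ y₂ ∈ Ystar, ∃ y₁ ∈ A, ∀ j, y₁ j ≤ ε + y₂ j}`. -/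
noncomputable def epsIndicator {m : ℕ} (A Ystar : Set (Fin m → ℝ)) : ℝ :=
  sInf {ε : ℝ | ∀ y₂ ∈ Ystar, ∃ y₁ ∈ A, ∀ j, y₁ j ≤ ε + y₂ j}

/-!
The best sample `y⁰` has `w_j |y⁰_j| ≤ c := inf g_w + δ`, so `y⁰_j ≤ c / w_j ≤ (max_j 1 / w_j) c`.
Among finitely many samples some nondominated one lies below `y⁰`, and as the front is
nonnegative, that single sample ε-dominates every front point for `ε = (max_j 1 / w_j) c`.
-/

section

variable {m : ℕ}

/-- The paper's `g_w`. -/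
noncomputable def weightedChebyshev [NeZero m] (w v : Fin m → ℝ) : ℝ :=
  univ.sup' univ_nonempty fun j => w j * |v j|

theorem dominates_iff_lt {a b : Fin m → ℝ} : Dominates a b ↔ a < b := by
  simp [Dominates, Pi.lt_def, Pi.le_def]

theorem exists_le_forall_not_dominates {ι : Type*} [Finite ι] (y : ι → Fin m → ℝ)
    (i : ι) : ∃ k, y k ≤ y i ∧ ∀ k', ¬ Dominates (y k') (y k) := by
  obtain ⟨_, hle, ⟨k, rfl⟩, hmin⟩ :=
    (Set.finite_range y).isPWO.exists_le_minimal (Set.mem_range_self i)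
  refine ⟨k, hle, fun k' hdom => ?_⟩
  rw [dominates_iff_lt] at hdom
  exact hdom.not_ge (hmin (Set.mem_range_self k') hdom.le)

theorem abs_le_mul_of_weightedChebyshev_le {m : ℕ} [NeZero m] {w v : Fin m → ℝ} {c : ℝ}
    (hw : ∀ j, 0 < w j) (hc : weightedChebyshev w v ≤ c) (j : Fin m) :
    |v j| ≤ (univ.sup' univ_nonempty fun j => 1 / w j) * c := by
  have hwj : w j * |v j| ≤ c := (le_sup' (fun j => w j * |v j|) (mem_univ j)).trans hc
  calc |v j| ≤ 1 / w j * c := by rw [one_div_mul_eq_div, le_div_iff₀' (hw j)]; exact hwj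
    _ ≤ _ := mul_le_mul_of_nonneg_right (le_sup' (fun j => 1 / w j) (mem_univ j))
      ((mul_nonneg (hw j).le (abs_nonneg _)).trans hwj)

/-- `hε` covers the junk value `0` that `sInf` takes on a set unbounded below
(e.g. when `Ystar` is empty). -/
theorem epsIndicator_le_of_forall_le {A Ystar : Set (Fin m → ℝ)} {a : Fin m → ℝ}
    {ε : ℝ} (hYstar : ∀ y ∈ Ystar, ∀ j, 0 ≤ y j) (ha : a ∈ A) (haε : ∀ j, a j ≤ ε)
    (hε : 0 ≤ ε) : epsIndicator A Ystar ≤ ε := by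
  rw [epsIndicator]
  set S := {ε : ℝ | ∀ y₂ ∈ Ystar, ∃ y₁ ∈ A, ∀ j, y₁ j ≤ ε + y₂ j}
  have hmem : ε ∈ S := fun y₂ hy₂ => ⟨a, ha, fun j => by linarith [haε j, hYstar y₂ hy₂ j]⟩
  by_cases hbdd : BddBelow S
  · exact csInf_le hbdd hmem
  · rw [Real.sInf_of_not_bddBelow hbdd]
    exact hε

end

theorem eps_indicator_le_of_near_optimal_sample_general
    (m N : ℕ) [NeZero m] [NeZero N]
    (Y : Set (Fin m → ℝ))
    (hideal : ∀ y ∈ ParetoFront Y, ∀ j, 0 ≤ y j)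
    (w : Fin m → ℝ) (hw : ∀ j, 0 < w j)
    (y : Fin N → Fin m → ℝ)
    (δ : ℝ)
    (hbest : (univ.inf' univ_nonempty fun i =>
        univ.sup' univ_nonempty fun j => w j * |y i j|) ≤
      sInf ((fun v => univ.sup' univ_nonempty fun j => w j * |v j|) '' Y) + δ) :
    epsIndicator {v | ∃ i, v = y i ∧ ∀ k, k ≠ i → ¬ Dominates (y k) (y i)}
        (ParetoFront Y) ≤
      (univ.sup' univ_nonempty fun j => 1 / w j) *
        (sInf ((fun v => univ.sup' univ_nonempty fun j => w j * |v j|) '' Y) + δ) := by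
  obtain ⟨i₀, -, hi₀⟩ := exists_mem_eq_inf' univ_nonempty fun i => weightedChebyshev w (y i)
  have hbound := abs_le_mul_of_weightedChebyshev_le hw (hi₀ ▸ hbest)
  obtain ⟨k, hk, hk_nondom⟩ := exists_le_forall_not_dominates y i₀
  exact epsIndicator_le_of_forall_le hideal ⟨k, rfl, fun k' _ => hk_nondom k'⟩
    (fun j => (hk j).trans ((le_abs_self _).trans (hbound j)))
    ((abs_nonneg _).trans (hbound 0))

/-- With `Y ⊆ ℝ^m` having a nonempty Pareto front of nonnegative vectors
(ideal point `0`), `w` strictly positive, `g_w(y) = max_j (w j * |y j|)`, samples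
`y¹, …, y^N ∈ Y`, `A` the nondominated samples, and the best sample δ-optimal for `g_w`
(`min_i g_w (y i) ≤ inf_{y ∈ Y} g_w y + δ`, `δ ≥ 0`), we have
`I¹_{ε+}(A) ≤ (max_j 1 / w j) * (inf_{y ∈ Y} g_w y + δ)`. -/
theorem eps_indicator_le_of_near_optimal_sample
    (m N : ℕ) [NeZero m] [NeZero N]
    (Y : Set (Fin m → ℝ))
    (hPFne : (ParetoFront Y).Nonempty)
    (hideal : ∀ y ∈ ParetoFront Y, ∀ j, 0 ≤ y j)
    (w : Fin m → ℝ) (hw : ∀ j, 0 < w j)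
    (y : Fin N → Fin m → ℝ) (hy : ∀ i, y i ∈ Y)
    (δ : ℝ) (hδ : 0 ≤ δ)
    (hbest : (univ.inf' univ_nonempty fun i =>
        univ.sup' univ_nonempty fun j => w j * |y i j|) ≤
      sInf ((fun v => univ.sup' univ_nonempty fun j => w j * |v j|) '' Y) + δ) :
    epsIndicator {v | ∃ i, v = y i ∧ ∀ k, k ≠ i → ¬ Dominates (y k) (y i)}
        (ParetoFront Y) ≤
      (univ.sup' univ_nonempty fun j => 1 / w j) *
        (sInf ((fun v => univ.sup' univ_nonempty fun j => w j * |v j|) '' Y) + δ) :=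
  eps_indicator_le_of_near_optimal_sample_general m N Y hideal w hw y δ hbest
end

section
/- Let X ⊆ ℝ^n be a feasible set, f = (f_1, ..., f_m) : X → ℝ^m a vector of objectives, and let x̂ ∈ X be Pareto optimal, i.e., there is no x ∈ X with f_j(x) ≤ f_j(x̂) for all j and f_k(x) < f_k(x̂) for some k. Let z ∈ ℝ^m be a utopian reference vector, i.e., z_j < f_j(x) for every x ∈ X and every j ∈ {1,...,m}. Then there exists a weight vector w ∈ ℝ^m with strictly positive entries such that x̂ is a global minimizer over X of the weighted Tchebycheff function g_w(x) = max_{1 ≤ j ≤ m} w_j |f_j(x) − z_j|, i.e., g_w(x̂) ≤ g_w(x) for all x ∈ X. -/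
open Finset

/-- Theorem 3.4.5 of Miettinen. If `x̂ ∈ X` is Pareto optimal for the
objectives `f₁, …, f_m` and `z` is a utopian reference vector (`z j < f j x` for all `x ∈ X`
and all `j`), then there is a strictly positive weight vector `w` such that `x̂` globally
minimizes the weighted Tchebycheff function `g_w x = max_j (w j * |f j x - z j|)` over `X`. -/
theorem pareto_optimal_solves_weighted_tchebycheff
    (n m : ℕ) [NeZero m]
    (X : Set (Fin n → ℝ)) (f : Fin m → (Fin n → ℝ) → ℝ)
    (xhat : Fin n → ℝ) (hxhat : xhat ∈ X)
    (hPareto : ¬ ∃ x ∈ X, (∀ j, f j x ≤ f j xhat) ∧ ∃ k, f k x < f k xhat)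
    (z : Fin m → ℝ) (hz : ∀ x ∈ X, ∀ j, z j < f j x) :
    ∃ w : Fin m → ℝ, (∀ j, 0 < w j) ∧
      ∀ x ∈ X, (univ.sup' univ_nonempty fun j => w j * |f j xhat - z j|) ≤
        univ.sup' univ_nonempty fun j => w j * |f j x - z j| := by
  have hpos : ∀ j, 0 < f j xhat - z j := fun j => sub_pos.2 (hz xhat hxhat j)
  refine ⟨fun j => (f j xhat - z j)⁻¹, fun j => inv_pos.2 (hpos j), fun x hx => ?_⟩
  have hhat : (univ.sup' univ_nonempty fun j => (f j xhat - z j)⁻¹ * |f j xhat - z j|) = 1 := by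
    have : ∀ j : Fin m, (f j xhat - z j)⁻¹ * |f j xhat - z j| = 1 := fun j => by
      rw [abs_of_pos (hpos j)]; exact inv_mul_cancel₀ (hpos j).ne'
    simp only [this, sup'_const]
  rw [hhat]
  by_contra h
  push_neg at h
  have hall : ∀ j, f j x < f j xhat := by
    intro j
    have hj := (le_sup' (fun j => (f j xhat - z j)⁻¹ * |f j x - z j|) (mem_univ j)).trans_lt h
    have hxp : 0 < f j x - z j := sub_pos.2 (hz x hx j)
    rw [abs_of_pos hxp, inv_mul_lt_iff₀ (hpos j), mul_one] at hj
    linarith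
  exact hPareto ⟨x, hx, fun j => (hall j).le, ⟨0, hall 0⟩⟩
end
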